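/- arXiv:2407.07194 — 2 statements merged into one kernel-verified Lean document; each statement's English description precedes it below -/
import Mathlib

section
/- Let R be a commutative ring and let (a_i)_{i≥0}, (c_i)_{i≥0} be sequences in R with a_0 = c_0 = 1 and ∑_{i+j=k} c_i a_j = δ_{k0} for all k. Let M be a free R-module with basis (β_n)_{n≥0} and set p_n := ∑_{i=0}^{n} c_i β_{n-i}. Define Δ : M → M ⊗_R M on the basis by Δ(β_n) = ∑_{i+j=n} β_i ⊗ β_j, extended R-linearly. Then Δ(p_n) = ∑_{i=0}^{n} ∑_{j=0}^{n} (if i+j ≥ n then a_{i+j-n} else 0) · p_{n-i} ⊗ p_{n-j}. -/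
open Finset in
lemma sum_extend' {β : Type*} [AddCommMonoid β] {m n : ℕ} (h : m ≤ n) (f : ℕ → β) :
    ∑ i ∈ range (m+1), f i = ∑ i ∈ range (n+1), if i ≤ m then f i else 0 := by
  rw [← Finset.sum_subset (Finset.range_subset_range.2 (by omega : m + 1 ≤ n + 1))
      (fun x hx hx' => by rw [if_neg (by simp at hx'; omega)])]
  exact Finset.sum_congr rfl fun i hi => by rw [if_pos (by simp at hi; omega)]

open Finset in
lemma tri_swap' {β : Type*} [AddCommMonoid β] (n : ℕ) (f : ℕ → ℕ → β) :
    ∑ k ∈ range (n+1), ∑ i ∈ range (n-k+1), f k i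
    = ∑ i ∈ range (n+1), ∑ k ∈ range (n-i+1), f k i := by
  have L : ∀ g : ℕ → ℕ → β, ∑ k ∈ range (n+1), ∑ i ∈ range (n-k+1), g k i
      = ∑ k ∈ range (n+1), ∑ i ∈ range (n+1), if k + i ≤ n then g k i else 0 := by
    intro g
    refine Finset.sum_congr rfl fun k hk => ?_
    simp only [mem_range] at hk
    rw [sum_extend' (Nat.sub_le n k)]
    exact Finset.sum_congr rfl fun i _ => by
      congr 1; simp only [eq_iff_iff]; omega
  rw [L, L fun k i => f i k, Finset.sum_comm]
  exact Finset.sum_congr rfl fun k _ => Finset.sum_congr rfl fun i _ => by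
    congr 1; simp only [eq_iff_iff]; omega

open Finset in
lemma sum4_swap' {β : Type*} [AddCommMonoid β] {s : Finset ℕ} (g : ℕ → ℕ → ℕ → ℕ → β) :
    ∑ i ∈ s, ∑ j ∈ s, ∑ u ∈ s, ∑ v ∈ s, g i j u v
    = ∑ u ∈ s, ∑ v ∈ s, ∑ i ∈ s, ∑ j ∈ s, g i j u v := by
  calc ∑ i ∈ s, ∑ j ∈ s, ∑ u ∈ s, ∑ v ∈ s, g i j u v
      = ∑ i ∈ s, ∑ u ∈ s, ∑ j ∈ s, ∑ v ∈ s, g i j u v :=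
        Finset.sum_congr rfl fun i _ => Finset.sum_comm
    _ = ∑ u ∈ s, ∑ i ∈ s, ∑ j ∈ s, ∑ v ∈ s, g i j u v := Finset.sum_comm
    _ = ∑ u ∈ s, ∑ i ∈ s, ∑ v ∈ s, ∑ j ∈ s, g i j u v :=
        Finset.sum_congr rfl fun u _ => Finset.sum_congr rfl fun i _ => Finset.sum_comm
    _ = ∑ u ∈ s, ∑ v ∈ s, ∑ i ∈ s, ∑ j ∈ s, g i j u v :=
        Finset.sum_congr rfl fun u _ => Finset.sum_comm

open Finset in
lemma keyK' {R : Type*} [CommRing R] (a c : ℕ → R)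
    (hconv : ∀ k, ∑ i ∈ Finset.range (k + 1), c i * a (k - i) = if k = 0 then 1 else 0)
    (n u v : ℕ) (hu : u ≤ n) (hv : v ≤ n) :
    ∑ i ∈ range (n+1), ∑ j ∈ range (n+1),
      (if n ≤ i + j then a (i+j-n) else 0) *
        ((if u ≤ n - i then c (n-i-u) else 0) * (if v ≤ n - j then c (n-j-v) else 0))
    = if u + v ≤ n then c (n-u-v) else 0 := by
  rw [← Finset.sum_subset (Finset.range_subset_range.2 (by omega : n - u + 1 ≤ n + 1))
      (fun i hi hi' => Finset.sum_eq_zero fun j _ => by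
        simp only [mem_range] at hi hi'
        rw [if_neg (show ¬ u ≤ n - i by omega), zero_mul, mul_zero])]
  rw [← Finset.sum_range_reflect]
  have hj : ∀ s ∈ range (n-u+1),
      (∑ j ∈ range (n+1),
        (if n ≤ (n-u+1-1-s) + j then a ((n-u+1-1-s)+j-n) else 0) *
          ((if u ≤ n - (n-u+1-1-s) then c (n-(n-u+1-1-s)-u) else 0) *
           (if v ≤ n - j then c (n-j-v) else 0)))
      = ∑ t ∈ range (n-v+1),
          (if s + t + u + v ≤ n then a (n-u-v-s-t) else 0) * (c s * c t) := by
    intro s hs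
    simp only [mem_range] at hs
    rw [← Finset.sum_subset (Finset.range_subset_range.2 (by omega : n - v + 1 ≤ n + 1))
        (fun j hj hj' => by
          simp only [mem_range] at hj hj'
          rw [if_neg (show ¬ v ≤ n - j by omega), mul_zero, mul_zero])]
    rw [← Finset.sum_range_reflect]
    refine Finset.sum_congr rfl fun t ht => ?_
    simp only [mem_range] at ht
    rw [if_pos (show u ≤ n - (n-u+1-1-s) by omega),
        if_pos (show v ≤ n - (n-v+1-1-t) by omega),
        show n-(n-u+1-1-s)-u = s by omega, show n-(n-v+1-1-t)-v = t by omega]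
    by_cases h : s + t + u + v ≤ n
    · rw [if_pos (show n ≤ (n-u+1-1-s) + (n-v+1-1-t) by omega), if_pos h,
        show (n-u+1-1-s)+(n-v+1-1-t)-n = n-u-v-s-t by omega]
    · rw [if_neg (show ¬ n ≤ (n-u+1-1-s) + (n-v+1-1-t) by omega), if_neg h]
  rw [Finset.sum_congr rfl hj]
  by_cases huv : u + v ≤ n
  · rw [if_pos huv]
    rw [← Finset.sum_subset (Finset.range_subset_range.2 (by omega : n - u - v + 1 ≤ n - u + 1))
        (fun s hs hs' => Finset.sum_eq_zero fun t _ => by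
          simp only [mem_range] at hs hs'
          rw [if_neg (show ¬ s + t + u + v ≤ n by omega), zero_mul])]
    have hin : ∀ s ∈ range (n-u-v+1),
        (∑ t ∈ range (n-v+1), (if s + t + u + v ≤ n then a (n-u-v-s-t) else 0) * (c s * c t))
        = if s = n - u - v then c s else 0 := by
      intro s hs
      simp only [mem_range] at hs
      rw [← Finset.sum_subset (Finset.range_subset_range.2 (by omega : n-u-v-s + 1 ≤ n - v + 1))
          (fun t ht ht' => by
            simp only [mem_range] at ht ht'
            rw [if_neg (show ¬ s + t + u + v ≤ n by omega), zero_mul])]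
      have : ∀ t ∈ range (n-u-v-s+1),
          (if s + t + u + v ≤ n then a (n-u-v-s-t) else 0) * (c s * c t)
          = c s * (c t * a ((n-u-v-s) - t)) := by
        intro t ht
        simp only [mem_range] at ht
        rw [if_pos (show s + t + u + v ≤ n by omega), show n-u-v-s-t = (n-u-v-s)-t by omega]
        ring
      rw [Finset.sum_congr rfl this, ← Finset.mul_sum, hconv (n-u-v-s)]
      by_cases hsK : s = n - u - v
      · rw [if_pos (show n-u-v-s = 0 by omega), if_pos hsK, mul_one]
      · rw [if_neg (show ¬ n-u-v-s = 0 by omega), if_neg hsK, mul_zero]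
    rw [Finset.sum_congr rfl hin, Finset.sum_ite_eq' (range (n-u-v+1)) (n-u-v) c,
        if_pos (by simp)]
  · rw [if_neg huv]
    refine Finset.sum_eq_zero fun s hs => Finset.sum_eq_zero fun t ht => by
      rw [if_neg (show ¬ s + t + u + v ≤ n by omega), zero_mul]

open TensorProduct in
/-- Coproduct formula in the geometric basis: with `Δ(β_n) = ∑_{i+j=n} β_i ⊗ β_j` and
`p_n = ∑ c_i • β_{n-i}`, one has
`Δ(p_n) = ∑_{i,j} a_{i+j-n} • p_{n-i} ⊗ p_{n-j}` (terms with `i+j < n` vanish). -/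
theorem stmt_3 (R : Type*) [CommRing R] (M : Type*) [AddCommGroup M] [Module R M]
    (b : Module.Basis ℕ R M) (a c : ℕ → R) (ha : a 0 = 1) (hc : c 0 = 1)
    (hconv : ∀ k, ∑ i ∈ Finset.range (k + 1), c i * a (k - i) = if k = 0 then 1 else 0)
    (Δ : M →ₗ[R] M ⊗[R] M)
    (hΔ : ∀ n, Δ (b n) = ∑ i ∈ Finset.range (n + 1), b i ⊗ₜ[R] b (n - i))
    (p : ℕ → M) (hp : ∀ n, p n = ∑ i ∈ Finset.range (n + 1), c i • b (n - i)) (n : ℕ) :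
    Δ (p n) = ∑ i ∈ Finset.range (n + 1), ∑ j ∈ Finset.range (n + 1),
      (if n ≤ i + j then a (i + j - n) else 0) • (p (n - i) ⊗ₜ[R] p (n - j)) := by
  classical
  have hp' : ∀ m, p m = ∑ u ∈ Finset.range (m+1), c (m - u) • b u := by
    intro m
    rw [hp m, ← Finset.sum_range_reflect]
    exact Finset.sum_congr rfl fun i hi => by
      simp only [Finset.mem_range] at hi
      rw [show m + 1 - 1 - i = m - i by omega, show m - (m - i) = i by omega]
  have hpg : ∀ i, i ≤ n →
      p (n-i) = ∑ u ∈ Finset.range (n+1), (if u ≤ n - i then c (n-i-u) else 0) • b u := by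
    intro i hi
    rw [hp' (n-i), sum_extend' (Nat.sub_le n i)]
    exact Finset.sum_congr rfl fun u _ => by
      by_cases h : u ≤ n - i
      · rw [if_pos h, if_pos h]
      · rw [if_neg h, if_neg h, zero_smul]
  have L1 : Δ (p n) = ∑ u ∈ Finset.range (n+1), ∑ v ∈ Finset.range (n+1),
      (if u + v ≤ n then c (n - u - v) else 0) • (b u ⊗ₜ[R] b v) := by
    rw [hp n, map_sum]
    have h1 : ∀ k ∈ Finset.range (n+1),
        Δ (c k • b (n-k)) = ∑ i ∈ Finset.range (n-k+1), c k • (b i ⊗ₜ[R] b (n-k-i)) := by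
      intro k _
      rw [map_smul, hΔ (n-k), Finset.smul_sum]
    rw [Finset.sum_congr rfl h1, tri_swap' n (fun k i => c k • (b i ⊗ₜ[R] b (n-k-i)))]
    refine Finset.sum_congr rfl fun u hu => ?_
    simp only [Finset.mem_range] at hu
    conv_lhs => rw [← Finset.sum_range_reflect]
    rw [sum_extend' (Nat.sub_le n u)]
    refine Finset.sum_congr rfl fun v hv => ?_
    simp only [Finset.mem_range] at hv
    rw [ite_smul, zero_smul]
    by_cases h : v ≤ n - u
    · rw [if_pos h, if_pos (show u + v ≤ n by omega),
        show n-u+1-1-v = n-u-v by omega,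
        show n - (n-u-v) - u = v by omega]
    · rw [if_neg h, if_neg (show ¬ u + v ≤ n by omega)]
  have L2 : (∑ i ∈ Finset.range (n + 1), ∑ j ∈ Finset.range (n + 1),
      (if n ≤ i + j then a (i + j - n) else 0) • (p (n - i) ⊗ₜ[R] p (n - j)))
      = ∑ u ∈ Finset.range (n+1), ∑ v ∈ Finset.range (n+1),
      (if u + v ≤ n then c (n - u - v) else 0) • (b u ⊗ₜ[R] b v) := by
    calc ∑ i ∈ Finset.range (n + 1), ∑ j ∈ Finset.range (n + 1),
        (if n ≤ i + j then a (i + j - n) else 0) • (p (n - i) ⊗ₜ[R] p (n - j))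
        = ∑ i ∈ Finset.range (n+1), ∑ j ∈ Finset.range (n+1),
            ∑ u ∈ Finset.range (n+1), ∑ v ∈ Finset.range (n+1),
            ((if n ≤ i + j then a (i+j-n) else 0) *
              ((if u ≤ n - i then c (n-i-u) else 0) *
               (if v ≤ n - j then c (n-j-v) else 0))) • (b u ⊗ₜ[R] b v) := by
          refine Finset.sum_congr rfl fun i hi => Finset.sum_congr rfl fun j hj => ?_
          simp only [Finset.mem_range] at hi hj
          rw [hpg i (by omega), hpg j (by omega), TensorProduct.sum_tmul, Finset.smul_sum]
          refine Finset.sum_congr rfl fun u _ => ?_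
          rw [TensorProduct.tmul_sum, Finset.smul_sum]
          refine Finset.sum_congr rfl fun v _ => ?_
          rw [← TensorProduct.smul_tmul', TensorProduct.tmul_smul, smul_smul, smul_smul, mul_assoc]
      _ = ∑ u ∈ Finset.range (n+1), ∑ v ∈ Finset.range (n+1),
            (∑ i ∈ Finset.range (n+1), ∑ j ∈ Finset.range (n+1),
              (if n ≤ i + j then a (i+j-n) else 0) *
                ((if u ≤ n - i then c (n-i-u) else 0) *
                 (if v ≤ n - j then c (n-j-v) else 0))) • (b u ⊗ₜ[R] b v) := by
          rw [sum4_swap']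
          refine Finset.sum_congr rfl fun u _ => Finset.sum_congr rfl fun v _ => ?_
          rw [Finset.sum_smul]
          exact Finset.sum_congr rfl fun i _ => by rw [Finset.sum_smul]
      _ = ∑ u ∈ Finset.range (n+1), ∑ v ∈ Finset.range (n+1),
            (if u + v ≤ n then c (n - u - v) else 0) • (b u ⊗ₜ[R] b v) := by
          refine Finset.sum_congr rfl fun u hu => Finset.sum_congr rfl fun v hv => ?_
          simp only [Finset.mem_range] at hu hv
          rw [keyK' a c hconv n u v (by omega) (by omega)]
  rw [L1, L2]
end

section
/- Let R be a commutative ring, F(x,y) = ∑ a_{ij}x^i y^j ∈ R[[x,y]] a power series with a_{00} = 0, and let a^{(k)}_{ij} denote the coefficient of x^i y^j in F^k. Let (a_i) := (a_{1,i})_{i≥0} and (c_i)_{i≥0} be sequences in R with a_0 = c_0 = 1 and ∑_{i+j=k} c_i a_j = δ_{k0}. Let M be the free R-module on basis (β_n)_{n≥0}, set p_n := ∑_{i} c_i β_{n-i}, and define an R-bilinear map σ : M × M → M by σ(β_i, β_j) := ∑_{k=0}^{i+j} a^{(k)}_{ij} β_k. Then σ(p_n, p_m) = ∑_{r=0}^{n+m}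 s^{(r)}_{n,m} · p_r, where s^{(r)}_{n,m} := ∑_{i,j,k≥0} c_i c_j a^{(r+k)}_{n-i, m-j} a_k (with coefficients interpreted as 0 outside their range of definition). -/
open Finset

/-- `powCoeff F k i j` is the coefficient `a^{(k)}_{ij}` of `x^i y^j` in `F^k`. -/
noncomputable def powCoeff {R : Type*} [CommRing R] (F : MvPowerSeries (Fin 2) R)
    (k i j : ℕ) : R :=
  MvPowerSeries.coeff (Finsupp.single (0 : Fin 2) i + Finsupp.single (1 : Fin 2) j) (F ^ k)

lemma vanish_aux {R : Type*} [CommRing R] {σ : Type*} [DecidableEq σ] (F : MvPowerSeries σ R)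
    (h00 : MvPowerSeries.coeff 0 F = 0) :
    ∀ (k : ℕ) (d : σ →₀ ℕ), d.sum (fun _ e => e) < k → MvPowerSeries.coeff d (F ^ k) = 0 := by
  intro k
  induction k with
  | zero => intro d hd; omega
  | succ k ih =>
    intro d hd
    rw [pow_succ, MvPowerSeries.coeff_mul]
    apply Finset.sum_eq_zero
    rintro ⟨d1, d2⟩ hmem
    rw [Finset.HasAntidiagonal.mem_antidiagonal] at hmem
    rcases eq_or_ne d2 0 with h | h
    · subst h; simp [h00]
    · have h2 : 1 ≤ d2.sum fun _ e => e := by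
        rcases Finsupp.ne_iff.mp h with ⟨x, hx⟩
        simp at hx
        have hxs : x ∈ d2.support := Finsupp.mem_support_iff.mpr (by omega)
        calc 1 ≤ d2 x := by omega
        _ ≤ d2.sum fun _ e => e :=
          Finset.single_le_sum (f := fun y => d2 y) (fun _ _ => Nat.zero_le _) hxs
      have : (d1.sum fun _ e => e) < k := by
        have := congrArg (fun d : σ →₀ ℕ => d.sum fun _ e => e) hmem
        simp [Finsupp.sum_add_index] at this
        omega
      simp [ih d1 this]

lemma vanish {R : Type*} [CommRing R] (F : MvPowerSeries (Fin 2) R)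
    (h00 : MvPowerSeries.coeff 0 F = 0) (k i j : ℕ) (h : i + j < k) :
    powCoeff F k i j = 0 := by
  apply vanish_aux F h00
  rw [Finsupp.sum_add_index (by simp) (by intros; rfl)]
  simp [Finsupp.sum_single_index]
  omega

lemma key {R : Type*} [CommRing R] (F : MvPowerSeries (Fin 2) R)
    (h00 : MvPowerSeries.coeff 0 F = 0) (a c : ℕ → R)
    (hconv : ∀ k, ∑ i ∈ Finset.range (k + 1), c i * a (k - i) = if k = 0 then 1 else 0)
    (N t i' j' : ℕ) (ht : t ≤ N) (hij : i' + j' ≤ N) :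
    ∑ u ∈ range (N + 1 - t), ∑ k ∈ range (N + 1),
        c u * powCoeff F (t + u + k) i' j' * a k = powCoeff F t i' j' := by
  have h1 : ∀ u ∈ range (N + 1 - t),
      ∑ k ∈ range (N + 1), c u * powCoeff F (t + u + k) i' j' * a k
        = ∑ k ∈ range (N + 1 - t - u), c u * powCoeff F (t + u + k) i' j' * a k := by
    intro u hu
    refine (Finset.sum_subset (Finset.range_subset_range.2 (by omega)) ?_).symm
    intro k hk hk'
    rw [mem_range] at hk hk'
    rw [vanish F h00 _ _ _ (by omega), mul_zero, zero_mul]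
  rw [Finset.sum_congr rfl h1,
    ← Finset.sum_range_diag_flip (N + 1 - t)
      (fun u k => c u * powCoeff F (t + u + k) i' j' * a k)]
  have h2 : ∀ s ∈ range (N + 1 - t),
      ∑ u ∈ range (s + 1), c u * powCoeff F (t + u + (s - u)) i' j' * a (s - u)
        = powCoeff F (t + s) i' j' * (if s = 0 then 1 else 0) := by
    intro s hs
    rw [← hconv s, Finset.mul_sum]
    refine Finset.sum_congr rfl fun u hu => ?_
    rw [mem_range] at hu
    have : t + u + (s - u) = t + s := by omega
    rw [this]; ring
  rw [Finset.sum_congr rfl h2]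
  rw [Finset.sum_eq_single_of_mem 0 (by rw [mem_range]; omega)
    (fun s _ hs => by simp [hs])]
  simp

/-- Product formula in the geometric basis (abstract Segre pushforward): with
`σ(β_i, β_j) = ∑_k a^{(k)}_{ij} β_k`, `p_n = ∑ c_i β_{n-i}`, `a_i = a_{1,i}` and `(c_i)`
the convolution inverse of `(a_i)`, one has `σ(p_n, p_m) = ∑_r s^{(r)}_{n,m} p_r` where
`s^{(r)}_{n,m} = ∑_{i,j,k} c_i c_j a^{(r+k)}_{n-i,m-j} a_k`. -/
theorem stmt_12 (R : Type*) [CommRing R] (M : Type*) [AddCommGroup M] [Module R M]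
    (F : MvPowerSeries (Fin 2) R)
    (h00 : MvPowerSeries.coeff 0 F = 0)
    (a c : ℕ → R)
    (haDef : ∀ i, a i = powCoeff F 1 1 i)
    (ha0 : a 0 = 1) (hc0 : c 0 = 1)
    (hconv : ∀ k, ∑ i ∈ Finset.range (k + 1), c i * a (k - i) = if k = 0 then 1 else 0)
    (b : Module.Basis ℕ R M)
    (σ : M →ₗ[R] M →ₗ[R] M)
    (hσ : ∀ i j, σ (b i) (b j) = ∑ k ∈ Finset.range (i + j + 1), powCoeff F k i j • b k)
    (p : ℕ → M)
    (hp : ∀ n, p n = ∑ i ∈ Finset.range (n + 1), c i • b (n - i)) (n m : ℕ) :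
    σ (p n) (p m) = ∑ r ∈ Finset.range (n + m + 1),
      (∑ i ∈ Finset.range (n + 1), ∑ j ∈ Finset.range (m + 1),
        ∑ k ∈ Finset.range (n + m + 1),
          c i * c j * powCoeff F (r + k) (n - i) (m - j) * a k) • p r := by
  set N := n + m with hN
  set S : ℕ → R := fun r => ∑ i ∈ range (n + 1), ∑ j ∈ range (m + 1),
      ∑ k ∈ range (N + 1), c i * c j * powCoeff F (r + k) (n - i) (m - j) * a k with hS
  -- LHS in basis form
  have hL : σ (p n) (p m) = ∑ t ∈ range (N + 1),
      (∑ i ∈ range (n + 1), ∑ j ∈ range (m + 1),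
        (c i * c j) * powCoeff F t (n - i) (m - j)) • b t := by
    rw [hp n, hp m]
    simp only [map_sum, map_smul, LinearMap.sum_apply, LinearMap.smul_apply, hσ,
      Finset.smul_sum, smul_smul]
    have hext : ∀ j ∈ range (m + 1), ∀ i ∈ range (n + 1),
        ∑ t ∈ range ((n - i) + (m - j) + 1),
            (c j * (c i * powCoeff F t (n - i) (m - j))) • b t
          = ∑ t ∈ range (N + 1), (c j * (c i * powCoeff F t (n - i) (m - j))) • b t := by
      intro j _ i _
      refine Finset.sum_subset (Finset.range_subset_range.2 (by omega)) ?_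
      intro t ht ht'
      rw [mem_range] at ht ht'
      rw [vanish F h00 _ _ _ (by omega)]
      simp
    calc ∑ j ∈ range (m + 1), ∑ i ∈ range (n + 1), ∑ t ∈ range ((n - i) + (m - j) + 1),
            (c j * (c i * powCoeff F t (n - i) (m - j))) • b t
        = ∑ j ∈ range (m + 1), ∑ i ∈ range (n + 1), ∑ t ∈ range (N + 1),
            (c j * (c i * powCoeff F t (n - i) (m - j))) • b t :=
          Finset.sum_congr rfl fun j hj => Finset.sum_congr rfl fun i hi => hext j hj i hi
      _ = ∑ j ∈ range (m + 1), ∑ t ∈ range (N + 1), ∑ i ∈ range (n + 1),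
            (c j * (c i * powCoeff F t (n - i) (m - j))) • b t :=
          Finset.sum_congr rfl fun j _ => Finset.sum_comm
      _ = ∑ t ∈ range (N + 1), ∑ j ∈ range (m + 1), ∑ i ∈ range (n + 1),
            (c j * (c i * powCoeff F t (n - i) (m - j))) • b t := Finset.sum_comm
      _ = _ := by
          refine Finset.sum_congr rfl fun t _ => ?_
          rw [Finset.sum_smul, Finset.sum_comm]
          refine Finset.sum_congr rfl fun i _ => ?_
          rw [Finset.sum_smul]
          refine Finset.sum_congr rfl fun j _ => ?_
          congr 1
          ring
  -- RHS in basis form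
  have hRHS : ∑ r ∈ range (N + 1), S r • p r
      = ∑ t ∈ range (N + 1),
          (∑ u ∈ range (N + 1 - t), c u * S (t + u)) • b t := by
    calc ∑ r ∈ range (N + 1), S r • p r
        = ∑ r ∈ range (N + 1), ∑ t ∈ range (r + 1), (S r * c (r - t)) • b t := by
          refine Finset.sum_congr rfl fun r _ => ?_
          rw [hp r, Finset.smul_sum]
          simp only [smul_smul]
          rw [← Finset.sum_range_reflect (fun u => (S r * c u) • b (r - u)) (r + 1)]
          refine Finset.sum_congr rfl fun t ht => ?_
          rw [mem_range] at ht
          have e1 : r + 1 - 1 - t = r - t := by omega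
          have e2 : r - (r - t) = t := by omega
          simp only [e1, e2]
      _ = ∑ t ∈ range (N + 1), ∑ r ∈ Finset.Ico t (N + 1), (S r * c (r - t)) • b t := by
          simp only [Finset.range_eq_Ico]
          rw [Finset.sum_Ico_Ico_comm 0 (N + 1) (fun t r => (S r * c (r - t)) • b t)]
      _ = _ := by
          refine Finset.sum_congr rfl fun t _ => ?_
          rw [Finset.sum_Ico_eq_sum_range, Finset.sum_smul]
          refine Finset.sum_congr rfl fun u _ => ?_
          have e : t + u - t = u := by omega
          rw [e, mul_comm]
  have hgoal : σ (p n) (p m) = ∑ r ∈ range (N + 1), S r • p r := by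
    rw [hL, hRHS]
    refine Finset.sum_congr rfl fun t ht => ?_
    rw [mem_range] at ht
    congr 1
    symm
    calc ∑ u ∈ range (N + 1 - t), c u * S (t + u)
        = ∑ i ∈ range (n + 1), ∑ j ∈ range (m + 1), ∑ u ∈ range (N + 1 - t),
            ∑ k ∈ range (N + 1),
              c u * (c i * c j * powCoeff F ((t + u) + k) (n - i) (m - j) * a k) := by
          simp only [hS, Finset.mul_sum]
          rw [Finset.sum_comm]
          exact Finset.sum_congr rfl fun i _ => Finset.sum_comm
      _ = ∑ i ∈ range (n + 1), ∑ j ∈ range (m + 1),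
            (c i * c j) * ∑ u ∈ range (N + 1 - t), ∑ k ∈ range (N + 1),
              c u * powCoeff F (t + u + k) (n - i) (m - j) * a k := by
          refine Finset.sum_congr rfl fun i _ => Finset.sum_congr rfl fun j _ => ?_
          rw [Finset.mul_sum]
          refine Finset.sum_congr rfl fun u _ => ?_
          rw [Finset.mul_sum]
          refine Finset.sum_congr rfl fun k _ => ?_
          rw [add_assoc]
          ring
      _ = _ := by
          refine Finset.sum_congr rfl fun i hi => Finset.sum_congr rfl fun j hj => ?_
          rw [mem_range] at hi hj
          rw [key F h00 a c hconv N t (n - i) (m - j) (by omega) (by omega)]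
  exact hgoal
end
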